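/- arXiv:2201.01017 — 4 statements merged into one kernel-verified Lean document; each statement's English description precedes it below -/
import Mathlib

section
/- Let H be a real Hilbert space, A : H → 2^H a maximally monotone operator and B : H → H a β-cocoercive operator for some β > 0. Then for every λ > 0 and every γ ∈ (0, 2β), the operator T_{λ,γ} = (1/λ)[Id − J_{γA}∘(Id − γB)] is λ(4β − γ)/(4β)-cocoercive; in particular, T_{λ,γ} is (λ/2)-cocoercive. -/
open scoped InnerProductSpace
open Filter Asymptotics MeasureTheory

variable {H : Type*} [NormedAddCommGroup H] [InnerProductSpace ℝ H] [CompleteSpace H]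

/-- A set-valued operator `A : H → 2^H` is monotone. -/
def IsMonotoneOp (A : H → Set H) : Prop :=
  ∀ x y u v : H, u ∈ A x → v ∈ A y → 0 ≤ ⟪u - v, x - y⟫_ℝ

/-- A set-valued operator is maximally monotone: it is monotone and its graph is not properly
contained in the graph of another monotone operator. -/
def IsMaximallyMonotone (A : H → Set H) : Prop :=
  IsMonotoneOp A ∧
    ∀ A' : H → Set H, IsMonotoneOp A' → (∀ x, A x ⊆ A' x) → A' = A

/-- `B` is `β`-cocoercive. -/
def IsCocoercive (β : ℝ) (B : H → H) : Prop :=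
  ∀ x y : H, β * ‖B x - B y‖ ^ 2 ≤ ⟪B x - B y, x - y⟫_ℝ

/-- `J γ` is the resolvent `J_{γA}` of `A`, i.e. the single-valued, everywhere defined map
characterized by `y = J_{γA}(x) ↔ (x − y)/γ ∈ A(y)`. -/
def IsResolventFamily (A : H → Set H) (J : ℝ → H → H) : Prop :=
  ∀ γ : ℝ, 0 < γ → ∀ x y : H, J γ x = y ↔ γ⁻¹ • (x - y) ∈ A y

/-- `T_{λ,γ} = (1/λ)[Id − J_{γA}∘(Id − γB)]`. -/
noncomputable def Tmap (J : ℝ → H → H) (B : H → H) (lam gam : ℝ) (x : H) : H :=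
  (1 / lam) • (x - J gam (x - gam • B x))

/-- The Yosida approximation `A_γ = (Id − J_{γA})/γ`. -/
noncomputable def yosida (J : ℝ → H → H) (gam : ℝ) (u : H) : H :=
  (1 / gam) • (u - J gam u)

/-- `zer(A + B) = {x ∈ H : 0 ∈ Ax + Bx}`. -/
def zerSum (A : H → Set H) (B : H → H) : Set H := {x | ∃ a ∈ A x, a + B x = 0}

/-- for `λ > 0`, `γ ∈ (0, 2β)`, the operator `T_{λ,γ}` is
`λ(4β − γ)/(4β)`-cocoercive; in particular it is `(λ/2)`-cocoercive. -/
theorem T_cocoercive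
    (A : H → Set H) (B : H → H) (β : ℝ) (hβ : 0 < β)
    (hA : IsMaximallyMonotone A) (hB : IsCocoercive β B)
    (J : ℝ → H → H) (hJ : IsResolventFamily A J)
    (lam gam : ℝ) (hlam : 0 < lam) (hgam : gam ∈ Set.Ioo 0 (2 * β)) :
    IsCocoercive (lam * (4 * β - gam) / (4 * β)) (Tmap J B lam gam) ∧
      IsCocoercive (lam / 2) (Tmap J B lam gam) := by
  have key : IsCocoercive (lam * (4 * β - gam) / (4 * β)) (Tmap J B lam gam) := by
    intro x y
    obtain ⟨hg0, hg2⟩ := hgam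
    set u := x - gam • B x with hu
    set v := y - gam • B y with hv
    set p := J gam u with hp
    set q := J gam v with hq
    set d := x - y with hd
    set e := B x - B y with he
    set w := d - (p - q) with hw
    have hpmem : gam⁻¹ • (u - p) ∈ A p := (hJ gam hg0 u p).mp rfl
    have hqmem : gam⁻¹ • (v - q) ∈ A q := (hJ gam hg0 v q).mp rfl
    have hmono := hA.1 p q _ _ hpmem hqmem
    have hsmul : gam⁻¹ • (u - p) - gam⁻¹ • (v - q) = gam⁻¹ • ((u - p) - (v - q)) := by
      module
    rw [hsmul, real_inner_smul_left] at hmono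
    have h1 : (0:ℝ) ≤ ⟪(u - p) - (v - q), p - q⟫_ℝ := by
      nlinarith [inv_pos.mpr hg0, hmono]
    have hid1 : (u - p) - (v - q) = w - gam • e := by
      rw [hu, hv, hw, hd, he]; module
    have hid2 : p - q = d - w := by rw [hw]; abel
    rw [hid1, hid2] at h1
    have hT : Tmap J B lam gam x - Tmap J B lam gam y = (1 / lam) • w := by
      simp only [Tmap]
      rw [hw, hd, hp, hq, hu, hv]; module
    clear_value w e d q p v u
    have h2 : β * ‖e‖^2 ≤ ⟪e, d⟫_ℝ := by rw [he, hd]; exact hB x y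
    have h1' : (0:ℝ) ≤ ⟪w, d⟫_ℝ - ‖w‖^2 - gam * ⟪e, d⟫_ℝ + gam * ⟪e, w⟫_ℝ := by
      rw [inner_sub_left, inner_sub_right, inner_sub_right, real_inner_smul_left,
        real_inner_smul_left, real_inner_self_eq_norm_sq] at h1
      linarith
    have h3 : 4 * β * ⟪e, w⟫_ℝ ≤ 4 * β^2 * ‖e‖^2 + ‖w‖^2 := by
      have hnn : (0:ℝ) ≤ ‖(2 * β) • e - w‖^2 := sq_nonneg _
      rw [norm_sub_sq_real, norm_smul, real_inner_smul_left, Real.norm_eq_abs,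
        abs_of_pos (by linarith : (0:ℝ) < 2 * β), mul_pow] at hnn
      nlinarith
    have h4β : (0:ℝ) < 4 * β := by linarith
    have a0 : (0:ℝ) ≤ 4 * β * (⟪w, d⟫_ℝ - ‖w‖^2 - gam * ⟪e, d⟫_ℝ + gam * ⟪e, w⟫_ℝ) :=
      mul_nonneg h4β.le h1'
    have a1 : gam * (β * ‖e‖^2) ≤ gam * ⟪e, d⟫_ℝ := mul_le_mul_of_nonneg_left h2 hg0.le
    have a1' : 4 * β * (gam * (β * ‖e‖^2)) ≤ 4 * β * (gam * ⟪e, d⟫_ℝ) :=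
      mul_le_mul_of_nonneg_left a1 h4β.le
    have a2 : gam * (4 * β * ⟪e, w⟫_ℝ) ≤ gam * (4 * β^2 * ‖e‖^2 + ‖w‖^2) :=
      mul_le_mul_of_nonneg_left h3 hg0.le
    have core4 : (4 * β - gam) * ‖w‖^2 ≤ 4 * β * ⟪w, d⟫_ℝ := by nlinarith [a0, a1', a2]
    rw [hT, real_inner_smul_left, norm_smul]
    have habs : ‖(1:ℝ) / lam‖ = 1 / lam := by
      rw [Real.norm_eq_abs, abs_of_pos (by positivity)]
    rw [habs, mul_pow, div_mul_eq_mul_div, div_le_iff₀ h4β]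
    have hrw : lam * (4 * β - gam) * ((1 / lam) ^ 2 * ‖w‖ ^ 2)
        = (1 / lam) * ((4 * β - gam) * ‖w‖^2) := by
      field_simp
    rw [hrw]
    calc (1 / lam) * ((4 * β - gam) * ‖w‖^2)
        ≤ (1 / lam) * (4 * β * ⟪w, d⟫_ℝ) :=
          mul_le_mul_of_nonneg_left core4 (by positivity)
      _ = 1 / lam * ⟪w, d⟫_ℝ * (4 * β) := by ring
  refine ⟨key, fun x y => ?_⟩
  have h := key x y
  have hle : lam / 2 ≤ lam * (4 * β - gam) / (4 * β) := by
    rw [div_le_div_iff₀ (by norm_num) (by linarith)]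
    nlinarith [hgam.2, hlam]
  calc lam / 2 * ‖Tmap J B lam gam x - Tmap J B lam gam y‖ ^ 2
      ≤ lam * (4 * β - gam) / (4 * β) * ‖Tmap J B lam gam x - Tmap J B lam gam y‖ ^ 2 :=
        mul_le_mul_of_nonneg_right hle (sq_nonneg _)
    _ ≤ _ := h
end

section
/- Let H be a real Hilbert space, A : H → 2^H a maximally monotone operator and B : H → H a β-cocoercive operator for some β > 0 such that zer(A + B) ≠ ∅. Then for all λ₁, λ₂ > 0, all γ₁, γ₂ ∈ (0, 2β), all x, y ∈ H and every x̄ ∈ zer(A + B), it holds that ‖λ₁ T_{λ₁,γ₁}(x) − λ₂ T_{λ₂,γ₂}(y)‖ ≤ 4‖x − y‖ + (4β|γ₁ − γ₂|/γ₁)‖B(x)‖ + (2|γ₁ − γ₂|/γ₁)‖x − x̄‖. -/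
open scoped InnerProductSpace
open Filter Asymptotics MeasureTheory

variable {H : Type*} [NormedAddCommGroup H] [InnerProductSpace ℝ H] [CompleteSpace H]

/-!
Write `P = J_{γ₁A}(x − γ₁Bx)` and `Q_z = J_{γ₂A}(z − γ₂Bz)`, so that
`λ₁T_{λ₁,γ₁}(x) − λ₂T_{λ₂,γ₂}(y) = (x − y) + (Q_y − Q_x) + (Q_x − P)`.
For `γ ≤ 2β` the forward–backward map `J_{γA} ∘ (Id − γB)` is nonexpansive (a firmly nonexpansive
resolvent after a nonexpansive forward step), which bounds the middle term by `‖x − y‖`.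
For the last term, the resolvent identity writes `P` as `J_{γ₂A}` of a point at distance at most
`|γ₁ − γ₂| (‖Bx‖ + ‖x − γ₁Bx − P‖ / γ₁)` from `x − γ₂Bx`; since `x̄` is a fixed point of the
forward–backward map, `‖x − P‖ ≤ 2‖x − x̄‖`. Finally `γ₁ < 2β` turns `2|γ₁ − γ₂|` into
`4β|γ₁ − γ₂|/γ₁`.
-/

section

variable {E : Type*} [NormedAddCommGroup E] [InnerProductSpace ℝ E]
  {A : E → Set E} {B : E → E} {J : ℝ → E → E}

theorem IsCocoercive.mul_norm_sub_le {β : ℝ} (hB : IsCocoercive β B) (x y : E) :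
    β * ‖B x - B y‖ ≤ ‖x - y‖ := by
  have hCS := real_inner_le_norm (B x - B y) (x - y)
  rcases (norm_nonneg (B x - B y)).eq_or_lt with h | h
  · rw [← h, mul_zero]
    exact norm_nonneg _
  · refine le_of_mul_le_mul_right ?_ h
    nlinarith [hB x y]

theorem IsCocoercive.norm_sub_smul_sub_le {β γ : ℝ} (hB : IsCocoercive β B) (hγ : 0 ≤ γ)
    (hγβ : γ ≤ 2 * β) (x y : E) :
    ‖(x - γ • B x) - (y - γ • B y)‖ ≤ ‖x - y‖ := by
  have hsq : ‖(x - y) - γ • (B x - B y)‖ ^ 2 ≤ ‖x - y‖ ^ 2 := by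
    rw [norm_sub_sq_real, real_inner_smul_right, norm_smul, Real.norm_of_nonneg hγ,
      real_inner_comm]
    nlinarith [hB x y, mul_nonneg (mul_nonneg hγ (sub_nonneg.mpr hγβ)) (sq_nonneg ‖B x - B y‖)]
  rw [show (x - γ • B x) - (y - γ • B y) = (x - y) - γ • (B x - B y) by rw [smul_sub]; abel]
  exact (pow_le_pow_iff_left₀ (norm_nonneg _) (norm_nonneg _) two_ne_zero).mp hsq

theorem IsResolventFamily.smul_sub_mem (hJ : IsResolventFamily A J) {γ : ℝ} (hγ : 0 < γ) (u : E) :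
    γ⁻¹ • (u - J γ u) ∈ A (J γ u) :=
  (hJ γ hγ u _).mp rfl

theorem IsResolventFamily.isCocoercive_one (hA : IsMonotoneOp A) (hJ : IsResolventFamily A J)
    {γ : ℝ} (hγ : 0 < γ) : IsCocoercive 1 (J γ) := by
  intro u v
  have hmono := hA _ _ _ _ (hJ.smul_sub_mem hγ u) (hJ.smul_sub_mem hγ v)
  rw [← smul_sub, real_inner_smul_left,
    show u - J γ u - (v - J γ v) = (u - v) - (J γ u - J γ v) by abel,
    inner_sub_left, real_inner_self_eq_norm_sq, real_inner_comm] at hmono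
  nlinarith [inv_pos.mpr hγ]

theorem IsResolventFamily.norm_sub_le (hA : IsMonotoneOp A) (hJ : IsResolventFamily A J)
    {γ : ℝ} (hγ : 0 < γ) (u v : E) : ‖J γ u - J γ v‖ ≤ ‖u - v‖ := by
  simpa using (hJ.isCocoercive_one hA hγ).mul_norm_sub_le u v

theorem IsResolventFamily.apply_rescale (hJ : IsResolventFamily A J) {γ₁ γ₂ : ℝ}
    (hγ₁ : 0 < γ₁) (hγ₂ : 0 < γ₂) (u : E) :
    J γ₂ ((γ₂ / γ₁) • u + (1 - γ₂ / γ₁) • J γ₁ u) = J γ₁ u := by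
  refine (hJ γ₂ hγ₂ _ _).mpr ?_
  convert hJ.smul_sub_mem hγ₁ u using 1
  rw [show (γ₂ / γ₁) • u + (1 - γ₂ / γ₁) • J γ₁ u - J γ₁ u = (γ₂ / γ₁) • (u - J γ₁ u) by
    module, smul_smul]
  congr 1
  field_simp

theorem IsResolventFamily.norm_sub_apply_le (hA : IsMonotoneOp A) (hJ : IsResolventFamily A J)
    {γ₁ γ₂ : ℝ} (hγ₁ : 0 < γ₁) (hγ₂ : 0 < γ₂) (u w : E) :
    ‖J γ₂ w - J γ₁ u‖ ≤ ‖w - u‖ + |γ₁ - γ₂| / γ₁ * ‖u - J γ₁ u‖ := by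
  have hdiff : w - ((γ₂ / γ₁) • u + (1 - γ₂ / γ₁) • J γ₁ u)
      = (w - u) + ((γ₁ - γ₂) / γ₁) • (u - J γ₁ u) := by
    match_scalars <;> field_simp
    ring
  calc ‖J γ₂ w - J γ₁ u‖
      = ‖J γ₂ w - J γ₂ ((γ₂ / γ₁) • u + (1 - γ₂ / γ₁) • J γ₁ u)‖ := by
        rw [hJ.apply_rescale hγ₁ hγ₂]
    _ ≤ ‖(w - u) + ((γ₁ - γ₂) / γ₁) • (u - J γ₁ u)‖ := hdiff ▸ hJ.norm_sub_le hA hγ₂ _ _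
    _ ≤ ‖w - u‖ + |γ₁ - γ₂| / γ₁ * ‖u - J γ₁ u‖ := by
        grw [norm_add_le, norm_smul, Real.norm_eq_abs, abs_div, abs_of_pos hγ₁]

def forwardBackward (J : ℝ → E → E) (B : E → E) (γ : ℝ) (x : E) : E :=
  J γ (x - γ • B x)

theorem smul_Tmap {lam : ℝ} (hlam : lam ≠ 0) (γ : ℝ) (x : E) :
    lam • Tmap J B lam γ x = x - forwardBackward J B γ x := by
  rw [Tmap, smul_smul, mul_one_div_cancel hlam, one_smul, forwardBackward]

theorem forwardBackward_norm_sub_le {β γ : ℝ} (hA : IsMonotoneOp A) (hJ : IsResolventFamily A J)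
    (hB : IsCocoercive β B) (hγ : 0 < γ) (hγβ : γ ≤ 2 * β) (x y : E) :
    ‖forwardBackward J B γ x - forwardBackward J B γ y‖ ≤ ‖x - y‖ :=
  (hJ.norm_sub_le hA hγ _ _).trans (hB.norm_sub_smul_sub_le hγ.le hγβ x y)

theorem forwardBackward_eq_self_of_mem_zerSum (hJ : IsResolventFamily A J) {γ : ℝ} (hγ : 0 < γ)
    {xbar : E} (hxbar : xbar ∈ zerSum A B) : forwardBackward J B γ xbar = xbar := by
  obtain ⟨a, ha, hsum⟩ := hxbar
  refine (hJ γ hγ _ _).mpr ?_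
  rwa [sub_sub_cancel_left, smul_neg, smul_smul, inv_mul_cancel₀ hγ.ne', one_smul,
    ← eq_neg_of_add_eq_zero_left hsum]

theorem norm_sub_forwardBackward_le {β γ : ℝ} (hA : IsMonotoneOp A) (hJ : IsResolventFamily A J)
    (hB : IsCocoercive β B) (hγ : 0 < γ) (hγβ : γ ≤ 2 * β) {xbar : E}
    (hxbar : xbar ∈ zerSum A B) (x : E) :
    ‖x - forwardBackward J B γ x‖ ≤ 2 * ‖x - xbar‖ := by
  have hfb := forwardBackward_norm_sub_le hA hJ hB hγ hγβ xbar x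
  rw [forwardBackward_eq_self_of_mem_zerSum hJ hγ hxbar, norm_sub_rev xbar x] at hfb
  calc ‖x - forwardBackward J B γ x‖
      ≤ ‖x - xbar‖ + ‖xbar - forwardBackward J B γ x‖ := norm_sub_le_norm_sub_add_norm_sub _ _ _
    _ ≤ 2 * ‖x - xbar‖ := by linarith

theorem norm_forwardBackward_sub_forwardBackward_le {β γ₁ γ₂ : ℝ} (hA : IsMonotoneOp A)
    (hJ : IsResolventFamily A J) (hB : IsCocoercive β B) (hγ₁ : 0 < γ₁) (hγ₁β : γ₁ ≤ 2 * β)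
    (hγ₂ : 0 < γ₂) {xbar : E} (hxbar : xbar ∈ zerSum A B) (x : E) :
    ‖forwardBackward J B γ₂ x - forwardBackward J B γ₁ x‖ ≤
      2 * |γ₁ - γ₂| * ‖B x‖ + 2 * |γ₁ - γ₂| / γ₁ * ‖x - xbar‖ := by
  have hstep : ‖(x - γ₁ • B x) - forwardBackward J B γ₁ x‖ ≤ 2 * ‖x - xbar‖ + γ₁ * ‖B x‖ := by
    rw [sub_right_comm]
    grw [norm_sub_le, norm_sub_forwardBackward_le hA hJ hB hγ₁ hγ₁β hxbar,
      norm_smul, Real.norm_of_nonneg hγ₁.le]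
  calc ‖forwardBackward J B γ₂ x - forwardBackward J B γ₁ x‖
      ≤ ‖(x - γ₂ • B x) - (x - γ₁ • B x)‖
          + |γ₁ - γ₂| / γ₁ * ‖(x - γ₁ • B x) - forwardBackward J B γ₁ x‖ :=
        hJ.norm_sub_apply_le hA hγ₁ hγ₂ _ _
    _ ≤ |γ₁ - γ₂| * ‖B x‖ + |γ₁ - γ₂| / γ₁ * (2 * ‖x - xbar‖ + γ₁ * ‖B x‖) := by
        rw [show (x - γ₂ • B x) - (x - γ₁ • B x) = (γ₁ - γ₂) • B x by module, norm_smul,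
          Real.norm_eq_abs]
        gcongr
    _ = 2 * |γ₁ - γ₂| * ‖B x‖ + 2 * |γ₁ - γ₂| / γ₁ * ‖x - xbar‖ := by
        field_simp
        ring

end

theorem lamT_estimate_general
    (A : H → Set H) (B : H → H) (β : ℝ)
    (hA : IsMaximallyMonotone A) (hB : IsCocoercive β B)
    (J : ℝ → H → H) (hJ : IsResolventFamily A J)
    (lam₁ lam₂ gam₁ gam₂ : ℝ) (hlam₁ : 0 < lam₁) (hlam₂ : 0 < lam₂)
    (hgam₁ : gam₁ ∈ Set.Ioo 0 (2 * β)) (hgam₂ : gam₂ ∈ Set.Ioo 0 (2 * β))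
    (x y xbar : H) (hxbar : xbar ∈ zerSum A B) :
    ‖lam₁ • Tmap J B lam₁ gam₁ x - lam₂ • Tmap J B lam₂ gam₂ y‖ ≤
      4 * ‖x - y‖ + 4 * β * |gam₁ - gam₂| / gam₁ * ‖B x‖
        + 2 * |gam₁ - gam₂| / gam₁ * ‖x - xbar‖ := by
  obtain ⟨hγ₁, hγ₁β⟩ := hgam₁
  obtain ⟨hγ₂, hγ₂β⟩ := hgam₂
  set P := forwardBackward J B gam₁ x
  set Q := forwardBackward J B gam₂ x
  set Qy := forwardBackward J B gam₂ y
  have hQQy : ‖Q - Qy‖ ≤ ‖x - y‖ := forwardBackward_norm_sub_le hA.1 hJ hB hγ₂ hγ₂β.le x y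
  have hQP : ‖Q - P‖ ≤ 2 * |gam₁ - gam₂| * ‖B x‖ + 2 * |gam₁ - gam₂| / gam₁ * ‖x - xbar‖ :=
    norm_forwardBackward_sub_forwardBackward_le hA.1 hJ hB hγ₁ hγ₁β.le hγ₂ hxbar x
  have hcoef : 2 * |gam₁ - gam₂| * ‖B x‖ ≤ 4 * β * |gam₁ - gam₂| / gam₁ * ‖B x‖ := by
    gcongr
    rw [le_div_iff₀ hγ₁]
    nlinarith [abs_nonneg (gam₁ - gam₂)]
  rw [smul_Tmap hlam₁.ne', smul_Tmap hlam₂.ne',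
    show x - P - (y - Qy) = (x - y) + (Qy - Q) + (Q - P) by abel]
  grw [norm_add₃_le, norm_sub_rev Qy Q, hQQy, hQP]
  linarith [norm_nonneg (x - y)]

/-- estimate for `‖λ₁T_{λ₁,γ₁}(x) − λ₂T_{λ₂,γ₂}(y)‖`. -/
theorem lamT_estimate
    (A : H → Set H) (B : H → H) (β : ℝ) (hβ : 0 < β)
    (hA : IsMaximallyMonotone A) (hB : IsCocoercive β B)
    (J : ℝ → H → H) (hJ : IsResolventFamily A J)
    (hzer : (zerSum A B).Nonempty)
    (lam₁ lam₂ gam₁ gam₂ : ℝ) (hlam₁ : 0 < lam₁) (hlam₂ : 0 < lam₂)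
    (hgam₁ : gam₁ ∈ Set.Ioo 0 (2 * β)) (hgam₂ : gam₂ ∈ Set.Ioo 0 (2 * β))
    (x y xbar : H) (hxbar : xbar ∈ zerSum A B) :
    ‖lam₁ • Tmap J B lam₁ gam₁ x - lam₂ • Tmap J B lam₂ gam₂ y‖ ≤
      4 * ‖x - y‖ + 4 * β * |gam₁ - gam₂| / gam₁ * ‖B x‖
        + 2 * |gam₁ - gam₂| / gam₁ * ‖x - xbar‖ :=
  lamT_estimate_general A B β hA hB J hJ lam₁ lam₂ gam₁ gam₂ hlam₁ hlam₂ hgam₁ hgam₂ x y xbar hxbar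
end

section
/- Let H be a real Hilbert space, A : H → 2^H a maximally monotone operator and B : H → H a β-cocoercive operator for some β > 0 such that zer(A + B) ≠ ∅. Then for all λ₁, λ₂ > 0, all γ₁, γ₂ ∈ (0, 2β), all x, y ∈ H and every x̄ ∈ zer(A + B), it holds that ‖T_{λ₁,γ₁}(x) − T_{λ₂,γ₂}(y)‖ ≤ (1/λ₁)[4‖x − y‖ + 4β(|γ₁ − γ₂|/γ₁)‖B(x)‖ + 2(|γ₁ − γ₂|/γ₁)‖x − x̄‖] + 2(|λ₂ − λ₁|/(λ₁λ₂))‖y − x̄‖. -/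
open scoped InnerProductSpace
open Filter Asymptotics MeasureTheory

variable {H : Type*} [NormedAddCommGroup H] [InnerProductSpace ℝ H] [CompleteSpace H]

set_option linter.unusedSectionVars false
set_option linter.unusedVariables false
set_option maxHeartbeats 800000

lemma resolvent_mem' (A : H → Set H) (J : ℝ → H → H) (hJ : IsResolventFamily A J)
    {γ : ℝ} (hγ : 0 < γ) (x : H) : γ⁻¹ • (x - J γ x) ∈ A (J γ x) :=
  (hJ γ hγ x (J γ x)).mp rfl

lemma J_nonexpansive' (A : H → Set H) (J : ℝ → H → H)
    (hA : IsMonotoneOp A) (hJ : IsResolventFamily A J)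
    {γ : ℝ} (hγ : 0 < γ) (u v : H) : ‖J γ u - J γ v‖ ≤ ‖u - v‖ := by
  set p := J γ u with hp'
  set q := J γ v with hq'
  have hp := resolvent_mem' A J hJ hγ u
  have hq := resolvent_mem' A J hJ hγ v
  have hm := hA _ _ _ _ hp hq
  rw [← smul_sub, real_inner_smul_left] at hm
  have hγi : (0:ℝ) < γ⁻¹ := inv_pos.mpr hγ
  have h1 : 0 ≤ ⟪(u - p) - (v - q), p - q⟫_ℝ := by nlinarith
  have h2 : (u - p) - (v - q) = (u - v) - (p - q) := by abel
  rw [h2, inner_sub_left, real_inner_self_eq_norm_sq] at h1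
  have h4 := real_inner_le_norm (u - v) (p - q)
  nlinarith [norm_nonneg (p - q), norm_nonneg (u - v)]

lemma fwd_nonexpansive' (B : H → H) (β : ℝ) (hβ : 0 < β) (hB : IsCocoercive β B)
    {γ : ℝ} (hγ : γ ∈ Set.Ioo 0 (2*β)) (x y : H) :
    ‖(x - γ • B x) - (y - γ • B y)‖ ≤ ‖x - y‖ := by
  have hc := hB x y
  have h1 : (x - γ • B x) - (y - γ • B y) = (x - y) - γ • (B x - B y) := by module
  have hexp : ‖(x - γ • B x) - (y - γ • B y)‖ ^ 2 ≤ ‖x - y‖ ^ 2 := by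
    rw [h1, norm_sub_sq_real, real_inner_smul_right, norm_smul, mul_pow, Real.norm_eq_abs,
      sq_abs, real_inner_comm]
    nlinarith [mul_le_mul_of_nonneg_left hc hγ.1.le,
      mul_nonneg (mul_nonneg (sub_nonneg.mpr hγ.2.le) hγ.1.le) (sq_nonneg ‖B x - B y‖)]
  nlinarith [norm_nonneg ((x - γ • B x) - (y - γ • B y)), norm_nonneg (x - y)]

lemma fb_nonexpansive' (A : H → Set H) (J : ℝ → H → H) (B : H → H) (β : ℝ) (hβ : 0 < β)
    (hB : IsCocoercive β B) (hA : IsMonotoneOp A) (hJ : IsResolventFamily A J)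
    {γ : ℝ} (hγ : γ ∈ Set.Ioo 0 (2*β)) (x y : H) :
    ‖J γ (x - γ • B x) - J γ (y - γ • B y)‖ ≤ ‖x - y‖ :=
  (J_nonexpansive' A J hA hJ hγ.1 _ _).trans (fwd_nonexpansive' B β hβ hB hγ x y)

lemma fb_fixed' (A : H → Set H) (J : ℝ → H → H) (B : H → H) (hJ : IsResolventFamily A J)
    {γ : ℝ} (hγ : 0 < γ) {xbar : H} (hx : xbar ∈ zerSum A B) :
    J γ (xbar - γ • B xbar) = xbar := by
  obtain ⟨a, ha, hab⟩ := hx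
  have ha' : a = -B xbar := eq_neg_of_add_eq_zero_left hab
  refine (hJ γ hγ _ _).mpr ?_
  have h1 : γ⁻¹ • (xbar - γ • B xbar - xbar) = -B xbar := by
    rw [show xbar - γ • B xbar - xbar = -(γ • B xbar) by abel, smul_neg, smul_smul,
      inv_mul_cancel₀ hγ.ne', one_smul]
  rw [h1, ← ha']; exact ha

lemma shift' (A : H → Set H) (J : ℝ → H → H) (hJ : IsResolventFamily A J)
    {γ₁ γ₂ : ℝ} (h1 : 0 < γ₁) (h2 : 0 < γ₂) (v : H) :
    J γ₁ v = J γ₂ ((γ₂/γ₁) • v + (1 - γ₂/γ₁) • J γ₁ v) := by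
  refine ((hJ γ₂ h2 _ _).mpr ?_).symm
  have key : γ₂⁻¹ • ((γ₂/γ₁) • v + (1 - γ₂/γ₁) • J γ₁ v - J γ₁ v) = γ₁⁻¹ • (v - J γ₁ v) := by
    rw [show (γ₂/γ₁) • v + (1 - γ₂/γ₁) • J γ₁ v - J γ₁ v = (γ₂/γ₁) • (v - J γ₁ v) by module,
      smul_smul]
    congr 1
    field_simp
  rw [key]; exact resolvent_mem' A J hJ h1 v

/-- estimate for `‖T_{λ₁,γ₁}(x) − T_{λ₂,γ₂}(y)‖`. -/
theorem T_estimate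
    (A : H → Set H) (B : H → H) (β : ℝ) (hβ : 0 < β)
    (hA : IsMaximallyMonotone A) (hB : IsCocoercive β B)
    (J : ℝ → H → H) (hJ : IsResolventFamily A J)
    (hzer : (zerSum A B).Nonempty)
    (lam₁ lam₂ gam₁ gam₂ : ℝ) (hlam₁ : 0 < lam₁) (hlam₂ : 0 < lam₂)
    (hgam₁ : gam₁ ∈ Set.Ioo 0 (2 * β)) (hgam₂ : gam₂ ∈ Set.Ioo 0 (2 * β))
    (x y xbar : H) (hxbar : xbar ∈ zerSum A B) :
    ‖Tmap J B lam₁ gam₁ x - Tmap J B lam₂ gam₂ y‖ ≤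
      (1 / lam₁) * (4 * ‖x - y‖ + 4 * β * (|gam₁ - gam₂| / gam₁) * ‖B x‖
          + 2 * (|gam₁ - gam₂| / gam₁) * ‖x - xbar‖)
        + 2 * (|lam₂ - lam₁| / (lam₁ * lam₂)) * ‖y - xbar‖ := by
  have hγ₁ := hgam₁.1
  have hγ₁' := hgam₁.2
  have hγ₂ := hgam₂.1
  set F : ℝ → H → H := fun γ z => J γ (z - γ • B z) with hF
  have hfix₁ : F gam₁ xbar = xbar := fb_fixed' A J B hJ hγ₁ hxbar
  have hfix₂ : F gam₂ xbar = xbar := fb_fixed' A J B hJ hγ₂ hxbar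
  have hfb₁ := fun u v => fb_nonexpansive' A J B β hβ hB hA.1 hJ hgam₁ u v
  have hfb₂ := fun u v => fb_nonexpansive' A J B β hβ hB hA.1 hJ hgam₂ u v
  -- bound ‖z - F γ z‖ ≤ 2‖z - xbar‖
  have hS1 : ‖x - F gam₁ x‖ ≤ 2 * ‖x - xbar‖ := by
    have h : ‖F gam₁ x - F gam₁ xbar‖ ≤ ‖x - xbar‖ := hfb₁ x xbar
    have he : x - F gam₁ x = (x - xbar) + (F gam₁ xbar - F gam₁ x) := by rw [hfix₁]; abel
    calc ‖x - F gam₁ x‖ = ‖(x - xbar) + (F gam₁ xbar - F gam₁ x)‖ := by rw [← he]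
      _ ≤ ‖x - xbar‖ + ‖F gam₁ xbar - F gam₁ x‖ := norm_add_le _ _
      _ ≤ 2 * ‖x - xbar‖ := by rw [norm_sub_rev (F gam₁ xbar)]; linarith
  have hS2 : ‖y - F gam₂ y‖ ≤ 2 * ‖y - xbar‖ := by
    have h : ‖F gam₂ y - F gam₂ xbar‖ ≤ ‖y - xbar‖ := hfb₂ y xbar
    have he : y - F gam₂ y = (y - xbar) + (F gam₂ xbar - F gam₂ y) := by rw [hfix₂]; abel
    calc ‖y - F gam₂ y‖ = ‖(y - xbar) + (F gam₂ xbar - F gam₂ y)‖ := by rw [← he]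
      _ ≤ ‖y - xbar‖ + ‖F gam₂ xbar - F gam₂ y‖ := norm_add_le _ _
      _ ≤ 2 * ‖y - xbar‖ := by rw [norm_sub_rev (F gam₂ xbar)]; linarith
  have hSxy : ‖(x - F gam₂ x) - (y - F gam₂ y)‖ ≤ 2 * ‖x - y‖ := by
    have h : ‖F gam₂ x - F gam₂ y‖ ≤ ‖x - y‖ := hfb₂ x y
    have he : (x - F gam₂ x) - (y - F gam₂ y) = (x - y) - (F gam₂ x - F gam₂ y) := by abel
    calc ‖(x - F gam₂ x) - (y - F gam₂ y)‖ = ‖(x - y) - (F gam₂ x - F gam₂ y)‖ := by rw [he]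
      _ ≤ ‖x - y‖ + ‖F gam₂ x - F gam₂ y‖ := norm_sub_le _ _
      _ ≤ 2 * ‖x - y‖ := by linarith
  -- resolvent-shift bound
  set d : ℝ := |gam₁ - gam₂| / gam₁ with hd
  have hd0 : 0 ≤ d := div_nonneg (abs_nonneg _) hγ₁.le
  have hres : ‖F gam₁ x - F gam₂ x‖ ≤ d * ‖x - F gam₁ x‖ := by
    set v := x - gam₁ • B x with hv
    set p := J gam₁ v with hp
    set w := (gam₂/gam₁) • v + (1 - gam₂/gam₁) • p with hw
    have hid : F gam₁ x = J gam₂ w := shift' A J hJ hγ₁ hγ₂ v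
    have hne : ‖J gam₂ w - J gam₂ (x - gam₂ • B x)‖ ≤ ‖w - (x - gam₂ • B x)‖ :=
      J_nonexpansive' A J hA.1 hJ hγ₂ _ _
    have hcalc : w - (x - gam₂ • B x) = (1 - gam₂/gam₁) • (p - x) := by
      rw [hw, hv]
      have h1ne : gam₁ ≠ 0 := hγ₁.ne'
      match_scalars <;> field_simp <;> ring
    have habs : |1 - gam₂/gam₁| = d := by
      rw [hd, show (1 : ℝ) - gam₂/gam₁ = (gam₁ - gam₂)/gam₁ by field_simp, abs_div,
        abs_of_pos hγ₁]
    calc ‖F gam₁ x - F gam₂ x‖ = ‖J gam₂ w - J gam₂ (x - gam₂ • B x)‖ := by rw [hid]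
      _ ≤ ‖w - (x - gam₂ • B x)‖ := hne
      _ = |1 - gam₂/gam₁| * ‖p - x‖ := by rw [hcalc, norm_smul, Real.norm_eq_abs]
      _ = d * ‖x - F gam₁ x‖ := by rw [habs, norm_sub_rev]
  -- combine S-parts
  have hmain : ‖(x - F gam₁ x) - (y - F gam₂ y)‖ ≤ 2 * ‖x - y‖ + d * (2 * ‖x - xbar‖) := by
    have he : (x - F gam₁ x) - (y - F gam₂ y)
        = ((x - F gam₂ x) - (y - F gam₂ y)) + (F gam₂ x - F gam₁ x) := by abel
    calc ‖(x - F gam₁ x) - (y - F gam₂ y)‖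
        ≤ ‖(x - F gam₂ x) - (y - F gam₂ y)‖ + ‖F gam₂ x - F gam₁ x‖ := by
          rw [he]; exact norm_add_le _ _
      _ ≤ 2 * ‖x - y‖ + d * ‖x - F gam₁ x‖ := by rw [norm_sub_rev (F gam₂ x)]; linarith
      _ ≤ 2 * ‖x - y‖ + d * (2 * ‖x - xbar‖) := by nlinarith
  -- split T difference
  set e : ℝ := |lam₂ - lam₁| / (lam₁ * lam₂) with hedef
  have he0 : 0 ≤ e := div_nonneg (abs_nonneg _) (by positivity)
  have hTsplit : Tmap J B lam₁ gam₁ x - Tmap J B lam₂ gam₂ y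
      = (1/lam₁) • ((x - F gam₁ x) - (y - F gam₂ y))
        + (1/lam₁ - 1/lam₂) • (y - F gam₂ y) := by
    simp only [Tmap, hF]; module
  have habs2 : |1/lam₁ - 1/lam₂| = e := by
    rw [hedef, show (1:ℝ)/lam₁ - 1/lam₂ = (lam₂ - lam₁)/(lam₁*lam₂) by field_simp,
      abs_div, abs_of_pos (by positivity : (0:ℝ) < lam₁ * lam₂)]
  have hfinal : ‖Tmap J B lam₁ gam₁ x - Tmap J B lam₂ gam₂ y‖
      ≤ (1/lam₁) * (2 * ‖x - y‖ + d * (2 * ‖x - xbar‖)) + e * (2 * ‖y - xbar‖) := by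
    rw [hTsplit]
    calc ‖(1/lam₁) • ((x - F gam₁ x) - (y - F gam₂ y))
          + (1/lam₁ - 1/lam₂) • (y - F gam₂ y)‖
        ≤ ‖(1/lam₁) • ((x - F gam₁ x) - (y - F gam₂ y))‖
          + ‖(1/lam₁ - 1/lam₂) • (y - F gam₂ y)‖ := norm_add_le _ _
      _ = (1/lam₁) * ‖(x - F gam₁ x) - (y - F gam₂ y)‖ + e * ‖y - F gam₂ y‖ := by
          rw [norm_smul, norm_smul, Real.norm_eq_abs, Real.norm_eq_abs, habs2,
            abs_of_pos (by positivity : (0:ℝ) < 1/lam₁)]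
      _ ≤ (1/lam₁) * (2 * ‖x - y‖ + d * (2 * ‖x - xbar‖)) + e * (2 * ‖y - xbar‖) := by
          have h1 : (0:ℝ) < 1/lam₁ := by positivity
          nlinarith
  refine hfinal.trans ?_
  have h1 : (0:ℝ) < 1/lam₁ := by positivity
  have hBx : (0:ℝ) ≤ ‖B x‖ := norm_nonneg _
  have hxy : (0:ℝ) ≤ ‖x - y‖ := norm_nonneg _
  have hyx : (0:ℝ) ≤ ‖y - xbar‖ := norm_nonneg _
  nlinarith [mul_nonneg (mul_nonneg hβ.le hd0) hBx, mul_nonneg h1.le hyx,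
    mul_nonneg h1.le (mul_nonneg (mul_nonneg hβ.le hd0) hBx), mul_nonneg h1.le hxy]
end

section
/- Let H be a real Hilbert space, A : H → 2^H a maximally monotone operator and B : H → H a β-cocoercive operator for some β > 0 such that zer(A + B) ≠ ∅. Let t₀ > 0, α > 1, ξ ≥ 0, λ(t) = λt² for all t ≥ t₀ with λ > 2/(α − 1)², and let γ : [t₀,∞) → (0, 2β) be differentiable with γ̇(t)/γ(t) = O(1/t) as t → +∞. Then every classic global solution x : [t₀,∞) → H of (Split-DIN-AVD) is bounded. -/
open scoped InnerProductSpace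
open Filter Asymptotics MeasureTheory

variable {H : Type*} [NormedAddCommGroup H] [InnerProductSpace ℝ H] [CompleteSpace H]

section AuxLemmas
variable {H : Type*} [NormedAddCommGroup H] [InnerProductSpace ℝ H]

/-- core cocoercivity of the forward-backward residual -/
lemma coco_M {A : H → Set H} {B : H → H} {β : ℝ}
    (hmono : IsMonotoneOp A) (hB : IsCocoercive β B)
    {J : ℝ → H → H} (hJ : IsResolventFamily A J)
    {γ : ℝ} (hγ0 : 0 < γ) (hγ2 : γ < 2 * β) (u v : H) :
    ‖(u - J γ (u - γ • B u)) - (v - J γ (v - γ • B v))‖ ^ 2 / 2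
      ≤ ⟪(u - J γ (u - γ • B u)) - (v - J γ (v - γ • B v)), u - v⟫_ℝ := by
  set p := J γ (u - γ • B u) with hp
  set q := J γ (v - γ • B v) with hq
  have hpA : γ⁻¹ • ((u - γ • B u) - p) ∈ A p := (hJ γ hγ0 _ p).mp hp.symm
  have hqA : γ⁻¹ • ((v - γ • B v) - q) ∈ A q := (hJ γ hγ0 _ q).mp hq.symm
  have hmon := hmono p q _ _ hpA hqA
  set w := u - v with hw
  set e := B u - B v with he
  set d := p - q with hd
  have hkey : 0 ≤ ⟪(w - γ • e) - d, d⟫_ℝ := by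
    have : γ⁻¹ • ((u - γ • B u) - p) - γ⁻¹ • ((v - γ • B v) - q)
        = γ⁻¹ • ((w - γ • e) - d) := by
      rw [← smul_sub]; congr 1
      simp only [hw, he, hd, smul_sub]; abel
    rw [this, real_inner_smul_left] at hmon
    have hγinv : 0 < γ⁻¹ := inv_pos.mpr hγ0
    nlinarith [hmon]
  have hco := hB u v
  rw [← he, ← hw] at hco
  have h1 : ‖w - γ • e‖ ^ 2 ≤ ‖w‖ ^ 2 := by
    have hexp : ‖w - γ • e‖ ^ 2 = ‖w‖ ^ 2 - 2 * (γ * ⟪e, w⟫_ℝ) + γ ^ 2 * ‖e‖ ^ 2 := by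
      rw [norm_sub_sq_real, real_inner_smul_right, norm_smul]
      rw [Real.norm_eq_abs, abs_of_pos hγ0, real_inner_comm w e]
      ring
    nlinarith [mul_le_mul_of_nonneg_left hco (le_of_lt hγ0),
      mul_nonneg (mul_nonneg hγ0.le (by linarith : (0:ℝ) ≤ 2*β - γ)) (sq_nonneg ‖e‖)]
  have h2 : ‖d‖ ^ 2 ≤ ⟪w - γ • e, d⟫_ℝ := by
    have : ⟪(w - γ • e) - d, d⟫_ℝ = ⟪w - γ • e, d⟫_ℝ - ‖d‖ ^ 2 := by
      rw [inner_sub_left, real_inner_self_eq_norm_sq]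
    linarith [hkey, this ▸ hkey]
  have h3 : ‖d‖ ≤ ‖w‖ := by
    have hle : ⟪w - γ • e, d⟫_ℝ ≤ ‖w - γ • e‖ * ‖d‖ := real_inner_le_norm _ _
    have hn1 : ‖w - γ • e‖ ≤ ‖w‖ := by
      nlinarith [norm_nonneg (w - γ • e), norm_nonneg w]
    nlinarith [norm_nonneg d, norm_nonneg w]
  have hwd : (u - p) - (v - q) = w - d := by simp only [hw, hd]; abel
  rw [hwd]
  have hexp2 : ⟪w - d, w⟫_ℝ = ‖w‖ ^ 2 - ⟪d, w⟫_ℝ := by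
    rw [inner_sub_left, real_inner_self_eq_norm_sq]
  have hexp3 : ‖w - d‖ ^ 2 = ‖w‖ ^ 2 - 2 * ⟪d, w⟫_ℝ + ‖d‖ ^ 2 := by
    rw [norm_sub_sq_real, real_inner_comm w d]
  nlinarith [h3, norm_nonneg d, norm_nonneg w]

/-- fixed point of the forward-backward map at a zero of `A + B` -/
lemma fix_of_zero {A : H → Set H} {B : H → H}
    {J : ℝ → H → H} (hJ : IsResolventFamily A J)
    {xs : H} (hxs : -B xs ∈ A xs) {γ : ℝ} (hγ0 : 0 < γ) :
    J γ (xs - γ • B xs) = xs := by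
  rw [hJ γ hγ0]
  have : (xs - γ • B xs) - xs = -(γ • B xs) := by abel
  rw [this, smul_neg, smul_smul, inv_mul_cancel₀ hγ0.ne', one_smul]
  exact hxs

/-- key inequality for `T` at a zero -/
lemma T_ineq {A : H → Set H} {B : H → H} {β : ℝ}
    (hmono : IsMonotoneOp A) (hB : IsCocoercive β B)
    {J : ℝ → H → H} (hJ : IsResolventFamily A J)
    {xs : H} (hxs : -B xs ∈ A xs)
    {γ : ℝ} (hγ0 : 0 < γ) (hγ2 : γ < 2 * β)
    {L : ℝ} (hL : 0 < L) (u : H) :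
    L / 2 * ‖Tmap J B L γ u‖ ^ 2 ≤ ⟪Tmap J B L γ u, u - xs⟫_ℝ := by
  have hfix := fix_of_zero hJ hxs hγ0
  have hM := coco_M hmono hB hJ hγ0 hγ2 u xs
  rw [hfix, sub_self, sub_zero] at hM
  set M := u - J γ (u - γ • B u) with hMdef
  have hTd : Tmap J B L γ u = (1 / L) • M := rfl
  rw [hTd, real_inner_smul_left, norm_smul, Real.norm_eq_abs,
    abs_of_pos (by positivity : (0:ℝ) < 1 / L)]
  have hLi : 0 < 1 / L := by positivity
  calc L / 2 * (1 / L * ‖M‖) ^ 2 = (1 / L) * (‖M‖ ^ 2 / 2) := by field_simp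
    _ ≤ (1 / L) * ⟪M, u - xs⟫_ℝ := mul_le_mul_of_nonneg_left hM hLi.le

/-- scalar AM-GM step -/
lemma amgm {K A B : ℝ} (hA : 0 ≤ A) (hB : 0 ≤ B)
    (h : K ^ 2 ≤ 4 * A * B) (P Q : ℝ) (hP : 0 ≤ P) (hQ : 0 ≤ Q) (hK : 0 ≤ K) :
    K * (P * Q) ≤ A * P ^ 2 + B * Q ^ 2 := by
  nlinarith [sq_nonneg (A * P ^ 2 - B * Q ^ 2), sq_nonneg (A * P ^ 2 + B * Q ^ 2),
    mul_nonneg (mul_nonneg hK hP) hQ, sq_nonneg (K * P * Q),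
    mul_le_mul_of_nonneg_right h (mul_nonneg (sq_nonneg P) (sq_nonneg Q)),
    mul_nonneg hA (sq_nonneg P), mul_nonneg hB (sq_nonneg Q)]

/-- inner-product expansion of the Lyapunov derivative -/
lemma inner_expand (b ξ t : ℝ) (xp Tf z : H) :
    ⟪(-b) • xp + (ξ - t) • Tf, b • z + t • (xp + ξ • Tf)⟫_ℝ + b ^ 2 * ⟪xp, z⟫_ℝ
      = -(t * b) * ‖xp‖ ^ 2 + (t * (ξ * (1 - b) - t)) * ⟪xp, Tf⟫_ℝ
        + (ξ - t) * b * ⟪Tf, z⟫_ℝ + (ξ - t) * t * ξ * ‖Tf‖ ^ 2 := by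
  simp only [inner_add_left, inner_add_right, real_inner_smul_left, real_inner_smul_right,
    real_inner_self_eq_norm_sq, real_inner_comm Tf xp]
  ring

end AuxLemmas

set_option maxHeartbeats 1000000

/-- every classic global solution of (Split-DIN-AVD) is bounded. -/
theorem trajectory_bounded
    (A : H → Set H) (B : H → H) (β : ℝ) (hβ : 0 < β)
    (hA : IsMaximallyMonotone A) (hB : IsCocoercive β B)
    (J : ℝ → H → H) (hJ : IsResolventFamily A J)
    (hzer : (zerSum A B).Nonempty)
    (t₀ α ξ lam : ℝ) (ht₀ : 0 < t₀) (hα : 1 < α) (hξ : 0 ≤ ξ)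
    (hlam : 2 / (α - 1) ^ 2 < lam)
    (gam gam' : ℝ → ℝ)
    (hgamd : ∀ t ≥ t₀, HasDerivAt gam (gam' t) t)
    (hgamrange : ∀ t ≥ t₀, gam t ∈ Set.Ioo 0 (2 * β))
    (hgamO : (fun t => gam' t / gam t) =O[atTop] fun t => 1 / t)
    (x x' x'' T' : ℝ → H)
    (hx : ∀ t ≥ t₀, HasDerivAt x (x' t) t)
    (hx' : ∀ t ≥ t₀, HasDerivAt x' (x'' t) t)
    (hx''c : ContinuousOn x'' (Set.Ici t₀))
    (hT : ∀ t ≥ t₀,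
      HasDerivAt (fun s => Tmap J B (lam * s ^ 2) (gam s) (x s)) (T' t) t)
    (heq : ∀ t ≥ t₀,
      x'' t + (α / t) • x' t + ξ • T' t
        + Tmap J B (lam * t ^ 2) (gam t) (x t) = 0)
    :
    ∃ C : ℝ, ∀ t ≥ t₀, ‖x t‖ ≤ C := by
  classical
  obtain ⟨xs, a, haA, hsuma⟩ := hzer
  have hxs : -B xs ∈ A xs := by
    have ha : a = -B xs := eq_neg_of_add_eq_zero_left hsuma
    rwa [ha] at haA
  have hmono := hA.1
  have hα1 : (0:ℝ) < α - 1 := by linarith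
  have hlam0 : 0 < lam := lt_trans (by positivity) hlam
  obtain ⟨b, hbdef⟩ : ∃ y : ℝ, y = (α - 1) / 2 := ⟨_, rfl⟩
  have hb0 : 0 < b := by rw [hbdef]; linarith
  obtain ⟨μ, hμdef⟩ : ∃ y : ℝ, y = 2 * b ^ 2 * lam := ⟨_, rfl⟩
  have hμ1 : 1 < μ := by
    have h1 : (0:ℝ) < (α - 1) ^ 2 := by positivity
    rw [div_lt_iff₀ h1] at hlam
    rw [hμdef, hbdef]; nlinarith
  obtain ⟨ε, hεdef⟩ : ∃ y : ℝ, y = (μ - 1) / (μ + 3) := ⟨_, rfl⟩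
  have hε0 : 0 < ε := by rw [hεdef]; apply div_pos <;> linarith
  have hε1 : ε < 1 := by rw [hεdef, div_lt_one (by linarith)]; linarith
  have hεkey : (1 + ε) ^ 2 ≤ μ * (1 - ε) := by
    have h3 : (μ + 3) * ε = μ - 1 := by rw [hεdef]; field_simp
    nlinarith [sq_nonneg ε]
  obtain ⟨t₁, ht₁def⟩ : ∃ y : ℝ, y = max t₀ (max 1 (ξ * (1 + b) / ε)) := ⟨_, rfl⟩
  have ht₁0 : t₀ ≤ t₁ := ht₁def ▸ le_max_left _ _
  have ht₁1 : (1:ℝ) ≤ t₁ := ht₁def ▸ le_trans (le_max_left _ _) (le_max_right _ _)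
  have ht₁ξ : ∀ t, t₁ ≤ t → ξ * (1 + b) ≤ ε * t := by
    intro t ht
    have h1 : ξ * (1 + b) / ε ≤ t :=
      le_trans (ht₁def ▸ le_trans (le_max_right _ _) (le_max_right _ _)) ht
    calc ξ * (1 + b) = (ξ * (1 + b) / ε) * ε := by field_simp
      _ ≤ t * ε := mul_le_mul_of_nonneg_right h1 hε0.le
      _ = ε * t := mul_comm _ _
  have htξ : ∀ t, t₁ ≤ t → ξ ≤ ε * t := by
    intro t ht
    have h1 := ht₁ξ t ht
    nlinarith
  -- the auxiliary functions
  obtain ⟨Tf, hTfdef⟩ : ∃ F : ℝ → H, F = fun s => Tmap J B (lam * s ^ 2) (gam s) (x s) :=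
    ⟨_, rfl⟩
  rw [← hTfdef] at hT
  obtain ⟨g, hgdef⟩ : ∃ F : ℝ → H, F = fun s => b • (x s - xs) + s • (x' s + ξ • Tf s) :=
    ⟨_, rfl⟩
  obtain ⟨E, hEdef⟩ : ∃ F : ℝ → ℝ, F = fun s =>
      (1/2) * ⟪g s, g s⟫_ℝ + (b ^ 2 / 2) * ⟪x s - xs, x s - xs⟫_ℝ := ⟨_, rfl⟩
  obtain ⟨E', hE'def⟩ : ∃ F : ℝ → ℝ, F = fun s =>
      ⟪(-b) • x' s + (ξ - s) • Tf s, g s⟫_ℝ + b ^ 2 * ⟪x' s, x s - xs⟫_ℝ := ⟨_, rfl⟩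
  -- derivative of E
  have hEderiv : ∀ t, t₀ ≤ t → HasDerivAt E (E' t) t := by
    intro t ht
    have ht0 : 0 < t := lt_of_lt_of_le ht₀ ht
    have hvd : HasDerivAt (fun s => x' s + ξ • Tf s) (x'' t + ξ • T' t) t :=
      (hx' t ht).add ((hT t ht).const_smul ξ)
    have hzd : HasDerivAt (fun s => x s - xs) (x' t) t := (hx t ht).sub_const xs
    have hgd0 := (hzd.const_smul b).add ((hasDerivAt_id t).smul hvd)
    simp only [id_eq, one_smul] at hgd0
    have hsum : x'' t + ξ • T' t = -((α / t) • x' t + Tf t) := by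
      apply eq_neg_of_add_eq_zero_left
      have hTt : Tf t = Tmap J B (lam * t ^ 2) (gam t) (x t) := by rw [hTfdef]
      rw [hTt, ← heq t ht]
      abel
    have hrw : b • x' t + (t • (x'' t + ξ • T' t) + (x' t + ξ • Tf t))
        = (-b) • x' t + (ξ - t) • Tf t := by
      rw [hsum, hbdef]
      match_scalars
      · field_simp [ht0.ne']
        ring
      · ring
    have hgd : HasDerivAt g ((-b) • x' t + (ξ - t) • Tf t) t := by
      rw [hgdef]; exact hrw ▸ hgd0
    have hE1 : HasDerivAt (fun s =>
        (1/2) * ⟪g s, g s⟫_ℝ + (b ^ 2 / 2) * ⟪x s - xs, x s - xs⟫_ℝ)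
        ((1/2) * (⟪g t, (-b) • x' t + (ξ - t) • Tf t⟫_ℝ
            + ⟪(-b) • x' t + (ξ - t) • Tf t, g t⟫_ℝ)
          + (b ^ 2 / 2) * (⟪x t - xs, x' t⟫_ℝ + ⟪x' t, x t - xs⟫_ℝ)) t :=
      ((hgd.inner ℝ hgd).const_mul (1/2)).add ((hzd.inner ℝ hzd).const_mul (b ^ 2 / 2))
    rw [hEdef, hE'def]
    have hflip : ⟪g t, (-b) • x' t + (ξ - t) • Tf t⟫_ℝ
        = ⟪(-b) • x' t + (ξ - t) • Tf t, g t⟫_ℝ := real_inner_comm _ _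
    have hflip2 : ⟪x t - xs, x' t⟫_ℝ = ⟪x' t, x t - xs⟫_ℝ := real_inner_comm _ _
    have : (1/2) * (⟪g t, (-b) • x' t + (ξ - t) • Tf t⟫_ℝ
            + ⟪(-b) • x' t + (ξ - t) • Tf t, g t⟫_ℝ)
          + (b ^ 2 / 2) * (⟪x t - xs, x' t⟫_ℝ + ⟪x' t, x t - xs⟫_ℝ)
        = ⟪(-b) • x' t + (ξ - t) • Tf t, g t⟫_ℝ + b ^ 2 * ⟪x' t, x t - xs⟫_ℝ := by
      rw [hflip, hflip2]; ring
    show HasDerivAt (fun s =>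
        (1/2) * ⟪g s, g s⟫_ℝ + (b ^ 2 / 2) * ⟪x s - xs, x s - xs⟫_ℝ)
        (⟪(-b) • x' t + (ξ - t) • Tf t, g t⟫_ℝ + b ^ 2 * ⟪x' t, x t - xs⟫_ℝ) t
    exact this ▸ hE1
  -- E' is nonpositive beyond t₁
  have hE'le : ∀ t, t₁ ≤ t → E' t ≤ 0 := by
    intro t ht
    have ht00 : t₀ ≤ t := le_trans ht₁0 ht
    have ht1 : (1:ℝ) ≤ t := le_trans ht₁1 ht
    have ht0 : 0 < t := lt_of_lt_of_le one_pos ht1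
    obtain ⟨hγ0, hγ2⟩ := hgamrange t ht00
    have hL : 0 < lam * t ^ 2 := mul_pos hlam0 (pow_pos ht0 2)
    have hS0 := T_ineq hmono hB hJ hxs hγ0 hγ2 hL (x t)
    have hTt : Tf t = Tmap J B (lam * t ^ 2) (gam t) (x t) := by rw [hTfdef]
    rw [← hTt] at hS0
    obtain ⟨P, hPdef⟩ : ∃ y : ℝ, y = ‖x' t‖ := ⟨_, rfl⟩
    obtain ⟨Q, hQdef⟩ : ∃ y : ℝ, y = ‖Tf t‖ := ⟨_, rfl⟩
    have hP : 0 ≤ P := hPdef ▸ norm_nonneg _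
    have hQ : 0 ≤ Q := hQdef ▸ norm_nonneg _
    have hS : lam * t ^ 2 / 2 * Q ^ 2 ≤ ⟪Tf t, x t - xs⟫_ℝ := by rw [hQdef]; exact hS0
    have hI2 : |⟪x' t, Tf t⟫_ℝ| ≤ P * Q := by
      rw [hPdef, hQdef]; exact abs_real_inner_le_norm _ _
    have hexp : E' t
        = -(t * b) * P ^ 2 + (t * (ξ * (1 - b) - t)) * ⟪x' t, Tf t⟫_ℝ
          + (ξ - t) * b * ⟪Tf t, x t - xs⟫_ℝ + (ξ - t) * t * ξ * Q ^ 2 := by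
      rw [hE'def, hgdef, hPdef, hQdef]
      exact inner_expand b ξ t (x' t) (Tf t) (x t - xs)
    have hξt : ξ ≤ ε * t := htξ t ht
    have hξbt : ξ * (1 + b) ≤ ε * t := ht₁ξ t ht
    have hξtt : ξ - t ≤ 0 := by nlinarith
    have habs : |t * (ξ * (1 - b) - t)| ≤ (1 + ε) * t ^ 2 := by
      rw [abs_le]
      constructor <;>
        nlinarith [mul_le_mul_of_nonneg_left hξbt ht0.le,
          mul_nonneg (mul_nonneg ht0.le hξ) hb0.le]
    have hcoefnn : (0:ℝ) ≤ (1 + ε) * t ^ 2 :=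
      mul_nonneg (by linarith) (sq_nonneg t)
    have hcross : (t * (ξ * (1 - b) - t)) * ⟪x' t, Tf t⟫_ℝ
        ≤ ((1 + ε) * t ^ 2) * (P * Q) := by
      calc (t * (ξ * (1 - b) - t)) * ⟪x' t, Tf t⟫_ℝ
          ≤ |(t * (ξ * (1 - b) - t)) * ⟪x' t, Tf t⟫_ℝ| := le_abs_self _
        _ = |t * (ξ * (1 - b) - t)| * |⟪x' t, Tf t⟫_ℝ| := abs_mul _ _
        _ ≤ ((1 + ε) * t ^ 2) * (P * Q) :=
            mul_le_mul habs hI2 (abs_nonneg _) hcoefnn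
    have ht3 : (0:ℝ) < t ^ 3 := pow_pos ht0 3
    have hBnn : (0:ℝ) ≤ (1 - ε) * b * lam * t ^ 3 / 2 := by
      have h5 := mul_nonneg (mul_nonneg (mul_nonneg
        (by linarith : (0:ℝ) ≤ 1 - ε) hb0.le) hlam0.le) ht3.le
      linarith
    have hamgm : ((1 + ε) * t ^ 2) * (P * Q)
        ≤ (t * b) * P ^ 2 + ((1 - ε) * b * lam * t ^ 3 / 2) * Q ^ 2 := by
      apply amgm (mul_nonneg ht0.le hb0.le) hBnn _ P Q hP hQ hcoefnn
      have h4 := mul_le_mul_of_nonneg_right hεkey (le_of_lt (pow_pos ht0 4))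
      rw [hμdef] at h4
      calc ((1 + ε) * t ^ 2) ^ 2 = (1 + ε) ^ 2 * t ^ 4 := by ring
        _ ≤ 2 * b ^ 2 * lam * (1 - ε) * t ^ 4 := h4
        _ = 4 * (t * b) * ((1 - ε) * b * lam * t ^ 3 / 2) := by ring
    have hpiece1 : (ξ - t) * b * ⟪Tf t, x t - xs⟫_ℝ
        ≤ (ξ - t) * b * (lam * t ^ 2 / 2 * Q ^ 2) := by
      exact mul_le_mul_of_nonpos_left hS
        (mul_nonpos_of_nonpos_of_nonneg hξtt hb0.le)
    have hpiece2 : (ξ - t) * t * ξ * Q ^ 2 ≤ 0 :=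
      mul_nonpos_of_nonpos_of_nonneg
        (mul_nonpos_of_nonpos_of_nonneg
          (mul_nonpos_of_nonpos_of_nonneg hξtt ht0.le) hξ) (sq_nonneg Q)
    have hfin : (1 - ε) * b * lam * t ^ 3 / 2 + (ξ - t) * b * (lam * t ^ 2 / 2) ≤ 0 := by
      have h1 : (1 - ε) * t + (ξ - t) ≤ 0 := by linarith
      have h2 : (0:ℝ) ≤ b * (lam * t ^ 2 / 2) := by positivity
      calc (1 - ε) * b * lam * t ^ 3 / 2 + (ξ - t) * b * (lam * t ^ 2 / 2)
          = ((1 - ε) * t + (ξ - t)) * (b * (lam * t ^ 2 / 2)) := by ring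
        _ ≤ 0 := mul_nonpos_of_nonpos_of_nonneg h1 h2
    have h9 : ((1 - ε) * b * lam * t ^ 3 / 2 + (ξ - t) * b * (lam * t ^ 2 / 2)) * Q ^ 2
        ≤ 0 := mul_nonpos_of_nonpos_of_nonneg hfin (sq_nonneg Q)
    rw [hexp]
    have h10 : ((1 - ε) * b * lam * t ^ 3 / 2) * Q ^ 2
        + (ξ - t) * b * (lam * t ^ 2 / 2 * Q ^ 2)
        = ((1 - ε) * b * lam * t ^ 3 / 2 + (ξ - t) * b * (lam * t ^ 2 / 2)) * Q ^ 2 := by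
      ring
    linarith only [hcross, hamgm, hpiece1, hpiece2, h9, h10]
  -- E is antitone on [t₁, ∞)
  have hanti : AntitoneOn E (Set.Ici t₁) := by
    apply antitoneOn_of_deriv_nonpos (convex_Ici t₁)
    · intro t ht
      exact ((hEderiv t (le_trans ht₁0 ht)).continuousAt).continuousWithinAt
    · intro t ht
      rw [interior_Ici] at ht
      exact ((hEderiv t (le_trans ht₁0 (le_of_lt ht))).differentiableAt).differentiableWithinAt
    · intro t ht
      rw [interior_Ici] at ht
      rw [(hEderiv t (le_trans ht₁0 (le_of_lt ht))).deriv]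
      exact hE'le t (le_of_lt ht)
  -- bound on [t₁, ∞)
  have hEbound : ∀ t, t₁ ≤ t → E t ≤ E t₁ :=
    fun t ht => hanti (Set.self_mem_Ici) ht ht
  have hlow : ∀ t, ‖x t - xs‖ ^ 2 ≤ 2 * E t / b ^ 2 := by
    intro t
    have h1 : (0:ℝ) ≤ ⟪g t, g t⟫_ℝ := real_inner_self_nonneg
    have h2 : ⟪x t - xs, x t - xs⟫_ℝ = ‖x t - xs‖ ^ 2 := real_inner_self_eq_norm_sq _
    have h3 : (b ^ 2 / 2) * ‖x t - xs‖ ^ 2 ≤ E t := by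
      rw [hEdef]; dsimp only; rw [h2]; linarith
    rw [le_div_iff₀ (by positivity : (0:ℝ) < b ^ 2)]
    linarith only [h3]
  obtain ⟨C₁, hC₁⟩ : ∃ C : ℝ, ∀ t ∈ Set.Icc t₀ t₁, ‖x t‖ ≤ C := by
    have hcont : ContinuousOn x (Set.Icc t₀ t₁) := fun t ht =>
      ((hx t ht.1).continuousAt).continuousWithinAt
    exact (isCompact_Icc).exists_bound_of_continuousOn hcont
  refine ⟨max C₁ (‖xs‖ + Real.sqrt (2 * E t₁ / b ^ 2)), fun t ht => ?_⟩
  by_cases hcase : t ≤ t₁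
  · exact le_trans (hC₁ t ⟨ht, hcase⟩) (le_max_left _ _)
  · push_neg at hcase
    have h1 : ‖x t - xs‖ ^ 2 ≤ 2 * E t₁ / b ^ 2 := by
      calc ‖x t - xs‖ ^ 2 ≤ 2 * E t / b ^ 2 := hlow t
        _ ≤ 2 * E t₁ / b ^ 2 := by
            have h := hEbound t (le_of_lt hcase)
            gcongr
    have h2 : ‖x t - xs‖ ≤ Real.sqrt (2 * E t₁ / b ^ 2) := by
      have := Real.sqrt_le_sqrt h1
      rwa [Real.sqrt_sq (norm_nonneg _)] at this
    have h3 : ‖x t‖ ≤ ‖xs‖ + ‖x t - xs‖ := by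
      calc ‖x t‖ = ‖xs + (x t - xs)‖ := by congr 1; abel
        _ ≤ ‖xs‖ + ‖x t - xs‖ := norm_add_le _ _
    exact le_trans (by linarith) (le_max_right _ _)
end
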